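/- arXiv:2306.16763 — 4 statements merged into one kernel-verified Lean document; each statement's English description precedes it below -/
import Mathlib

section
/- For any two matrices T, T' in the transport polytope U(a,b), the Frobenius distance satisfies ‖T − T'‖ ≤ 2·min{√m·‖a‖_∞, √n·‖b‖_∞}. -/
/-- The transport polytope `U(a,b)`. -/
def transportPolytope {m n : ℕ} (a : Fin m → ℝ) (b : Fin n → ℝ) :
    Set (Matrix (Fin m) (Fin n) ℝ) :=
  {T | (∀ j k, 0 ≤ T j k) ∧ (∀ j, ∑ k, T j k = a j) ∧ (∀ k, ∑ j, T j k = b k)}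

/-- The Frobenius norm. -/
noncomputable def frob {m n : ℕ} (T : Matrix (Fin m) (Fin n) ℝ) : ℝ :=
  Real.sqrt (∑ j, ∑ k, (T j k) ^ 2)

lemma aux_bound {m n : ℕ} (a : Fin m → ℝ) (ha : ∀ j, 0 ≤ a j)
    (T T' : Matrix (Fin m) (Fin n) ℝ)
    (hTpos : ∀ j k, 0 ≤ T j k) (hT'pos : ∀ j k, 0 ≤ T' j k)
    (hTrow : ∀ j, ∑ k, T j k = a j) (hT'row : ∀ j, ∑ k, T' j k = a j) :
    Real.sqrt (∑ j, ∑ k, (T j k - T' j k) ^ 2) ≤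
      2 * (Real.sqrt m * ⨆ j, |a j|) := by
  set S := ⨆ j, |a j| with hS
  have hS0 : 0 ≤ S := Real.iSup_nonneg fun j => abs_nonneg _
  have haS : ∀ j, a j ≤ S := fun j =>
    (le_abs_self _).trans
      (le_ciSup (f := fun j => |a j|) (Set.Finite.bddAbove (Set.finite_range _)) j)
  have key : ∑ j, ∑ k, (T j k - T' j k) ^ 2 ≤ (m : ℝ) * (2 * S) ^ 2 := by
    calc ∑ j, ∑ k, (T j k - T' j k) ^ 2
        ≤ ∑ j : Fin m, (2 * S) ^ 2 := by
          apply Finset.sum_le_sum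
          intro j _
          have h1 : ∑ k, (T j k - T' j k) ^ 2 ≤ (∑ k, |T j k - T' j k|) ^ 2 := by
            have := Finset.sum_sq_le_sq_sum_of_nonneg
              (s := Finset.univ) (f := fun k => |T j k - T' j k|)
              (fun k _ => abs_nonneg _)
            simpa [sq_abs] using this
          have h2 : ∑ k, |T j k - T' j k| ≤ 2 * a j := by
            calc ∑ k, |T j k - T' j k| ≤ ∑ k, (T j k + T' j k) := by
                  apply Finset.sum_le_sum
                  intro k _
                  calc |T j k - T' j k| ≤ |T j k| + |T' j k| := abs_sub _ _
                    _ = T j k + T' j k := by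
                      rw [abs_of_nonneg (hTpos j k), abs_of_nonneg (hT'pos j k)]
              _ = 2 * a j := by rw [Finset.sum_add_distrib, hTrow, hT'row]; ring
          have h3 : (∑ k, |T j k - T' j k|) ^ 2 ≤ (2 * a j) ^ 2 :=
            pow_le_pow_left₀ (Finset.sum_nonneg fun k _ => abs_nonneg _) h2 2
          have h4 : (2 * a j) ^ 2 ≤ (2 * S) ^ 2 := by
            apply pow_le_pow_left₀
            · linarith [ha j]
            · linarith [haS j]
          linarith
      _ = (m : ℝ) * (2 * S) ^ 2 := by simp [mul_comm]
  calc Real.sqrt (∑ j, ∑ k, (T j k - T' j k) ^ 2)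
      ≤ Real.sqrt ((m : ℝ) * (2 * S) ^ 2) := Real.sqrt_le_sqrt key
    _ = Real.sqrt m * (2 * S) := by
        rw [Real.sqrt_mul (by positivity), Real.sqrt_sq (by positivity)]
    _ = 2 * (Real.sqrt m * S) := by ring

/-- For any `T, T'` in the transport polytope `U(a,b)`, the Frobenius distance satisfies
`‖T − T'‖ ≤ 2 · min {√m·‖a‖_∞, √n·‖b‖_∞}`. -/
theorem frob_dist_le_of_mem_transportPolytope {m n : ℕ} (a : Fin m → ℝ) (b : Fin n → ℝ)
    (ha : ∀ j, 0 ≤ a j) (hb : ∀ k, 0 ≤ b k)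
    (T T' : Matrix (Fin m) (Fin n) ℝ)
    (hT : T ∈ transportPolytope a b) (hT' : T' ∈ transportPolytope a b) :
    frob (T - T') ≤
      2 * min (Real.sqrt m * (⨆ j, |a j|)) (Real.sqrt n * (⨆ k, |b k|)) := by
  obtain ⟨hTpos, hTr, hTc⟩ := hT
  obtain ⟨hT'pos, hTr', hTc'⟩ := hT'
  rw [mul_min_of_nonneg _ _ (by norm_num : (0:ℝ) ≤ 2)]
  unfold frob
  apply le_min
  · simpa [Matrix.sub_apply] using aux_bound a ha T T' hTpos hT'pos hTr hTr'
  · have := aux_bound b hb T.transpose T'.transpose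
      (fun k j => hTpos j k) (fun k j => hT'pos j k) hTc hTc'
    simp only [Matrix.transpose_apply] at this
    rw [Finset.sum_comm] at this
    simpa [Matrix.sub_apply] using this
end

section
/- Let W ∈ ℝ^{m×n}, a ∈ ℝ₊^m, b ∈ ℝ₊^n with aᵀ𝟙ₘ = bᵀ𝟙ₙ = 1, and λ > 0. Let T' minimize ⟨W,T⟩ over T ∈ U(a,b), and let T'' minimize ⟨W,T⟩ + λ h(T) over T ∈ U(a,b). Then 0 ≤ ⟨W, T'' − T'⟩ ≤ −λ h(a bᵀ). -/
/-- The negative entropy `h(T) = Σ_{ij} t_{ij}(log t_{ij} − 1)`. -/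
noncomputable def negEntropy {m n : ℕ} (T : Matrix (Fin m) (Fin n) ℝ) : ℝ :=
  ∑ j, ∑ k, T j k * (Real.log (T j k) - 1)

/-- The Frobenius inner product. -/
noncomputable def finner {m n : ℕ} (A B : Matrix (Fin m) (Fin n) ℝ) : ℝ :=
  ∑ j, ∑ k, A j k * B j k


-- pointwise Gibbs
lemma pw_gibbs (t q : ℝ) (ht : 0 ≤ t) (hq : 0 ≤ q) (h0 : q = 0 → t = 0) :
    t * Real.log q + t - q ≤ t * Real.log t := by
  rcases eq_or_lt_of_le ht with h | h
  · simp [← h]; linarith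
  · have hq' : 0 < q := by
      rcases eq_or_lt_of_le hq with h' | h'
      · exact absurd (h0 h'.symm) (ne_of_gt h)
      · exact h'
    have := Real.log_le_sub_one_of_pos (show 0 < q / t by positivity)
    rw [Real.log_div (ne_of_gt hq') (ne_of_gt h)] at this
    have h2 : t * (Real.log q - Real.log t) ≤ t * (q / t - 1) :=
      mul_le_mul_of_nonneg_left this ht
    have h3 : t * (q / t - 1) = q - t := by field_simp
    nlinarith

lemma finner_sub {m n : ℕ} (W A B : Matrix (Fin m) (Fin n) ℝ) :
    finner W (A - B) = finner W A - finner W B := by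
  simp [finner, Finset.sum_sub_distrib, mul_sub, Matrix.sub_apply]

lemma prodMatMem {m n : ℕ} (a : Fin m → ℝ) (b : Fin n → ℝ)
    (ha : ∀ j, 0 ≤ a j) (hb : ∀ k, 0 ≤ b k)
    (hsa : ∑ j, a j = 1) (hsb : ∑ k, b k = 1) :
    (fun j k => a j * b k) ∈ transportPolytope a b := by
  refine ⟨fun j k => mul_nonneg (ha j) (hb k), fun j => ?_, fun k => ?_⟩
  · rw [← Finset.mul_sum, hsb, mul_one]
  · rw [← Finset.sum_mul, hsa, one_mul]

lemma sum_log_marg {m n : ℕ} (a : Fin m → ℝ) (b : Fin n → ℝ)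
    (T : Matrix (Fin m) (Fin n) ℝ) (hT : T ∈ transportPolytope a b) :
    ∑ j, ∑ k, T j k * Real.log (a j * b k)
      = ∑ j, a j * Real.log (a j) + ∑ k, b k * Real.log (b k) := by
  obtain ⟨hpos, hrow, hcol⟩ := hT
  have key : ∀ j k, T j k * Real.log (a j * b k)
      = T j k * Real.log (a j) + T j k * Real.log (b k) := by
    intro j k
    by_cases h : T j k = 0
    · simp [h]
    · have ht : 0 < T j k := lt_of_le_of_ne (hpos j k) (Ne.symm h)
      have haj : 0 < a j := by
        rw [← hrow j]
        exact lt_of_lt_of_le ht (Finset.single_le_sum (fun i _ => hpos j i) (Finset.mem_univ k))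
      have hbk : 0 < b k := by
        rw [← hcol k]
        exact lt_of_lt_of_le ht (Finset.single_le_sum (fun i _ => hpos i k) (Finset.mem_univ j))
      rw [Real.log_mul (ne_of_gt haj) (ne_of_gt hbk)]; ring
  simp_rw [key, Finset.sum_add_distrib]
  congr 1
  · congr 1; ext j; rw [← Finset.sum_mul, hrow j]
  · rw [Finset.sum_comm]; congr 1; ext k; rw [← Finset.sum_mul, hcol k]

lemma negEntropy_nonpos {m n : ℕ} (a : Fin m → ℝ) (b : Fin n → ℝ)
    (ha : ∀ j, 0 ≤ a j) (hsa : ∑ j, a j = 1)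
    (T : Matrix (Fin m) (Fin n) ℝ) (hT : T ∈ transportPolytope a b) :
    negEntropy T ≤ 0 := by
  obtain ⟨hpos, hrow, _⟩ := hT
  refine Finset.sum_nonpos fun j _ => Finset.sum_nonpos fun k _ => ?_
  have h1 : T j k ≤ 1 := by
    calc T j k ≤ a j := by
          rw [← hrow j]
          exact Finset.single_le_sum (fun i _ => hpos j i) (Finset.mem_univ k)
      _ ≤ 1 := by
          rw [← hsa]
          exact Finset.single_le_sum (fun i _ => ha i) (Finset.mem_univ j)
  have hlog : Real.log (T j k) ≤ 0 := by
    rcases eq_or_lt_of_le (hpos j k) with h | h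
    · simp [← h]
    · exact Real.log_nonpos (le_of_lt h) h1
  nlinarith [hpos j k]

lemma negEntropy_prod_le {m n : ℕ} (a : Fin m → ℝ) (b : Fin n → ℝ)
    (ha : ∀ j, 0 ≤ a j) (hb : ∀ k, 0 ≤ b k)
    (hsa : ∑ j, a j = 1) (hsb : ∑ k, b k = 1)
    (T : Matrix (Fin m) (Fin n) ℝ) (hT : T ∈ transportPolytope a b) :
    negEntropy (fun j k => a j * b k) ≤ negEntropy T := by
  obtain ⟨hpos, hrow, hcol⟩ := hT
  have hsumT : ∑ j, ∑ k, T j k = 1 := by simp_rw [hrow]; exact hsa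
  have hsumQ : ∑ j, ∑ k, a j * b k = 1 := by
    simp_rw [← Finset.mul_sum, hsb, mul_one]; exact hsa
  have hpt : ∀ j k, T j k * Real.log (a j * b k) + T j k - a j * b k
      ≤ T j k * Real.log (T j k) := by
    intro j k
    refine pw_gibbs _ _ (hpos j k) (mul_nonneg (ha j) (hb k)) ?_
    intro h
    rcases mul_eq_zero.mp h with h' | h'
    · have : ∑ i, T j i = 0 := by rw [hrow j, h']
      have := (Finset.sum_eq_zero_iff_of_nonneg (fun i _ => hpos j i)).mp this k (Finset.mem_univ k)
      exact this
    · have : ∑ i, T i k = 0 := by rw [hcol k, h']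
      exact (Finset.sum_eq_zero_iff_of_nonneg (fun i _ => hpos i k)).mp this j (Finset.mem_univ j)
  have hsum : ∑ j, ∑ k, (T j k * Real.log (a j * b k) + T j k - a j * b k)
      ≤ ∑ j, ∑ k, T j k * Real.log (T j k) :=
    Finset.sum_le_sum fun j _ => Finset.sum_le_sum fun k _ => hpt j k
  have hlhs : ∑ j, ∑ k, (T j k * Real.log (a j * b k) + T j k - a j * b k)
      = (∑ j, a j * Real.log (a j) + ∑ k, b k * Real.log (b k)) := by
    have := sum_log_marg a b T ⟨hpos, hrow, hcol⟩
    simp_rw [Finset.sum_sub_distrib, Finset.sum_add_distrib]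
    rw [this, hsumT, hsumQ]; ring
  have hQlog : ∑ j, ∑ k, (a j * b k) * Real.log (a j * b k)
      = ∑ j, a j * Real.log (a j) + ∑ k, b k * Real.log (b k) :=
    sum_log_marg a b _ (prodMatMem a b ha hb hsa hsb)
  unfold negEntropy
  simp_rw [mul_sub, mul_one, Finset.sum_sub_distrib]
  rw [hsumT, hsumQ, hQlog]
  linarith [hlhs ▸ hsum]

/-- If `T'` minimizes `⟨W,T⟩` over `U(a,b)` and `T''` minimizes `⟨W,T⟩ + λ h(T)` over
`U(a,b)`, with `a, b` probability marginals and `λ > 0`, then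
`0 ≤ ⟨W, T'' − T'⟩ ≤ −λ h(a bᵀ)`. -/
theorem entropy_regularization_error {m n : ℕ} (W : Matrix (Fin m) (Fin n) ℝ)
    (a : Fin m → ℝ) (b : Fin n → ℝ)
    (ha : ∀ j, 0 ≤ a j) (hb : ∀ k, 0 ≤ b k)
    (hsa : ∑ j, a j = 1) (hsb : ∑ k, b k = 1)
    (lam : ℝ) (hlam : 0 < lam)
    (T' T'' : Matrix (Fin m) (Fin n) ℝ)
    (hT' : T' ∈ transportPolytope a b)
    (hT'min : ∀ T ∈ transportPolytope a b, finner W T' ≤ finner W T)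
    (hT'' : T'' ∈ transportPolytope a b)
    (hT''min : ∀ T ∈ transportPolytope a b,
      finner W T'' + lam * negEntropy T'' ≤ finner W T + lam * negEntropy T) :
    0 ≤ finner W (T'' - T') ∧
      finner W (T'' - T') ≤ -(lam * negEntropy (fun j k => a j * b k)) := by
  rw [finner_sub]
  have h1 := hT'min T'' hT''
  have h2 := hT''min T' hT'
  have h3 := negEntropy_nonpos a b ha hsa T' hT'
  have h4 := negEntropy_prod_le a b ha hb hsa hsb T'' hT''
  constructor
  · linarith
  · nlinarith
end

section
/- Let f be differentiable on a product of transport polytopes with the block-gradient Lipschitz property: ‖∇_i f(X) − ∇_i f(X')‖ ≤ L‖X − X'‖ for all feasible X, X'. Define R_i(X) = max_{T ∈ U(a_i,b_i)} ⟨∇_i f(X), X_i − T⟩. If X' and X'' are feasible points with X'_i = X''_i, then |R_i(X') − R_i(X'')| ≤ 2 d_i L ‖X' − X''‖, where d_i = min{√(m_i)‖a_i‖_∞, √(n_i)‖b_i‖_∞}. -/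
/-- The Frobenius norm of a tuple of blocks. -/
noncomputable def frobTotal {N : ℕ} {m n : Fin N → ℕ}
    (X : ∀ i, Matrix (Fin (m i)) (Fin (n i)) ℝ) : ℝ :=
  Real.sqrt (∑ i, ∑ j, ∑ k, (X i j k) ^ 2)

/-- The block stationarity residual
`R_i(X) = max_{T ∈ U(a_i,b_i)} ⟨∇_i f(X), X_i − T⟩`. -/
noncomputable def blockResidual {N : ℕ} {m n : Fin N → ℕ}
    (a : ∀ i, Fin (m i) → ℝ) (b : ∀ i, Fin (n i) → ℝ)
    (gradf : (∀ i, Matrix (Fin (m i)) (Fin (n i)) ℝ) →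
      ∀ i, Matrix (Fin (m i)) (Fin (n i)) ℝ)
    (X : ∀ i, Matrix (Fin (m i)) (Fin (n i)) ℝ) (i : Fin N) : ℝ :=
  ⨆ T : transportPolytope (a i) (b i), finner (gradf X i) (X i - (T : Matrix _ _ ℝ))

/-! Since `X'_i = X''_i`, both residuals are suprema over `U(a_i,b_i)` of `T ↦ ⟨G, X'_i − T⟩`,
differing only in the gradient `G`. Pointwise the two functionals differ by at most
`‖∇_i f(X') − ∇_i f(X'')‖ · ‖X'_i − T‖` (Cauchy–Schwarz), and `‖X'_i − T‖ ≤ 2 d_i` because a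
nonnegative matrix with row sums `a` satisfies `‖T‖² ≤ ∑_j (∑_k T_jk)² = ∑_j a_j²`, and likewise
by columns. -/

noncomputable def frobVec {m n : ℕ} (M : Matrix (Fin m) (Fin n) ℝ) :
    EuclideanSpace ℝ (Fin m × Fin n) :=
  WithLp.toLp 2 fun p => M p.1 p.2

section Frobenius

variable {m n : ℕ}

lemma frob_eq_norm_frobVec (M : Matrix (Fin m) (Fin n) ℝ) : frob M = ‖frobVec M‖ := by
  simp [frob, frobVec, EuclideanSpace.norm_eq, Fintype.sum_prod_type]

lemma finner_eq_inner_frobVec (A B : Matrix (Fin m) (Fin n) ℝ) :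
    finner A B = inner ℝ (frobVec A) (frobVec B) := by
  simp [finner, frobVec, PiLp.inner_apply, Fintype.sum_prod_type, mul_comm]

lemma frobVec_sub (A B : Matrix (Fin m) (Fin n) ℝ) :
    frobVec (A - B) = frobVec A - frobVec B := rfl

lemma frob_nonneg (M : Matrix (Fin m) (Fin n) ℝ) : 0 ≤ frob M := Real.sqrt_nonneg _

lemma frob_transpose (M : Matrix (Fin m) (Fin n) ℝ) : frob M.transpose = frob M := by
  rw [frob, frob, Finset.sum_comm]
  rfl

lemma frob_sub_le (A B : Matrix (Fin m) (Fin n) ℝ) : frob (A - B) ≤ frob A + frob B := by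
  simpa only [frob_eq_norm_frobVec, frobVec_sub] using norm_sub_le (frobVec A) (frobVec B)

lemma abs_finner_le (A B : Matrix (Fin m) (Fin n) ℝ) : |finner A B| ≤ frob A * frob B := by
  simpa only [finner_eq_inner_frobVec, frob_eq_norm_frobVec]
    using abs_real_inner_le_norm (frobVec A) (frobVec B)

lemma finner_sub_left (A B C : Matrix (Fin m) (Fin n) ℝ) :
    finner (A - B) C = finner A C - finner B C := by
  simp [finner, sub_mul, Finset.sum_sub_distrib]

end Frobenius

lemma frob_le_sqrt_mul_iSup_abs_of_rowSum {m n : ℕ} {a : Fin m → ℝ}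
    {T : Matrix (Fin m) (Fin n) ℝ} (hT : ∀ j k, 0 ≤ T j k) (hrow : ∀ j, ∑ k, T j k = a j) :
    frob T ≤ Real.sqrt m * ⨆ j, |a j| := by
  set M := ⨆ j, |a j|
  have hM : 0 ≤ M := Real.iSup_nonneg fun j => abs_nonneg (a j)
  have hrow_sq : ∀ j, ∑ k, T j k ^ 2 ≤ M ^ 2 := fun j =>
    calc ∑ k, T j k ^ 2 ≤ (∑ k, T j k) ^ 2 := Finset.sum_sq_le_sq_sum_of_nonneg fun k _ => hT j k
      _ = |a j| ^ 2 := by rw [hrow j, sq_abs]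
      _ ≤ M ^ 2 := by gcongr; exact le_ciSup (f := fun j => |a j|) (Set.finite_range _).bddAbove j
  calc frob T ≤ Real.sqrt (m * M ^ 2) := by
        refine Real.sqrt_le_sqrt ?_
        simpa using Finset.sum_le_sum fun j (_ : j ∈ Finset.univ) => hrow_sq j
    _ = Real.sqrt m * M := by rw [Real.sqrt_mul (Nat.cast_nonneg m), Real.sqrt_sq hM]

lemma frob_le_of_mem_transportPolytope {m n : ℕ} {a : Fin m → ℝ} {b : Fin n → ℝ}
    {T : Matrix (Fin m) (Fin n) ℝ} (hT : T ∈ transportPolytope a b) :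
    frob T ≤ min (Real.sqrt m * ⨆ j, |a j|) (Real.sqrt n * ⨆ k, |b k|) := by
  obtain ⟨hpos, hrow, hcol⟩ := hT
  refine le_min (frob_le_sqrt_mul_iSup_abs_of_rowSum hpos hrow) ?_
  rw [← frob_transpose]
  exact frob_le_sqrt_mul_iSup_abs_of_rowSum (fun k j => hpos j k) hcol

lemma ciSup_le_ciSup_add {ι : Type*} [Nonempty ι] {F G : ι → ℝ} {c : ℝ}
    (hG : BddAbove (Set.range G)) (h : ∀ x, F x ≤ G x + c) : ⨆ x, F x ≤ (⨆ x, G x) + c :=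
  ciSup_le fun x => (h x).trans (by gcongr; exact le_ciSup hG x)

lemma abs_ciSup_sub_ciSup_le {ι : Type*} [Nonempty ι] {F G : ι → ℝ} {c : ℝ}
    (hF : BddAbove (Set.range F)) (hG : BddAbove (Set.range G)) (h : ∀ x, |F x - G x| ≤ c) :
    |(⨆ x, F x) - ⨆ x, G x| ≤ c := by
  rw [abs_sub_le_iff, sub_le_iff_le_add', sub_le_iff_le_add']
  refine ⟨ciSup_le_ciSup_add hG fun x => ?_, ciSup_le_ciSup_add hF fun x => ?_⟩
  · linarith [(abs_sub_le_iff.mp (h x)).1]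
  · linarith [(abs_sub_le_iff.mp (h x)).2]

lemma abs_iSup_finner_sub_iSup_finner_le {m n : ℕ} {S : Set (Matrix (Fin m) (Fin n) ℝ)}
    [Nonempty S] {X : Matrix (Fin m) (Fin n) ℝ} {D : ℝ} (hD : ∀ T ∈ S, frob (X - T) ≤ D)
    (G H : Matrix (Fin m) (Fin n) ℝ) :
    |(⨆ T : S, finner G (X - T)) - ⨆ T : S, finner H (X - T)| ≤ frob (G - H) * D := by
  have hbound (K : Matrix (Fin m) (Fin n) ℝ) (T : S) : |finner K (X - T)| ≤ frob K * D :=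
    (abs_finner_le _ _).trans (mul_le_mul_of_nonneg_left (hD T T.2) (frob_nonneg K))
  have hbdd (K : Matrix (Fin m) (Fin n) ℝ) : BddAbove (Set.range fun T : S => finner K (X - T)) :=
    ⟨frob K * D, by rintro _ ⟨T, rfl⟩; exact (le_abs_self _).trans (hbound K T)⟩
  refine abs_ciSup_sub_ciSup_le (hbdd G) (hbdd H) fun T => ?_
  rw [← finner_sub_left]
  exact hbound (G - H) T

theorem blockResidual_lipschitz_general {N : ℕ} {m n : Fin N → ℕ}
    (a : ∀ i, Fin (m i) → ℝ) (b : ∀ i, Fin (n i) → ℝ)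
    (gradf : (∀ i, Matrix (Fin (m i)) (Fin (n i)) ℝ) →
      ∀ i, Matrix (Fin (m i)) (Fin (n i)) ℝ)
    (L : ℝ)
    (hlip : ∀ X X' : ∀ i, Matrix (Fin (m i)) (Fin (n i)) ℝ,
      (∀ i, X i ∈ transportPolytope (a i) (b i)) →
      (∀ i, X' i ∈ transportPolytope (a i) (b i)) →
      ∀ i, frob (gradf X i - gradf X' i) ≤ L * frobTotal (fun i => X i - X' i))
    (X' X'' : ∀ i, Matrix (Fin (m i)) (Fin (n i)) ℝ)
    (hX' : ∀ i, X' i ∈ transportPolytope (a i) (b i))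
    (hX'' : ∀ i, X'' i ∈ transportPolytope (a i) (b i))
    (i : Fin N) (hEq : X' i = X'' i) :
    |blockResidual a b gradf X' i - blockResidual a b gradf X'' i| ≤
      2 * min (Real.sqrt (m i) * (⨆ j, |a i j|)) (Real.sqrt (n i) * (⨆ k, |b i k|)) *
        L * frobTotal (fun i => X' i - X'' i) := by
  set d := min (Real.sqrt (m i) * (⨆ j, |a i j|)) (Real.sqrt (n i) * (⨆ k, |b i k|))
  have : Nonempty (transportPolytope (a i) (b i)) := ⟨⟨X' i, hX' i⟩⟩
  have hdiam : ∀ T ∈ transportPolytope (a i) (b i), frob (X' i - T) ≤ 2 * d := fun T hT =>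
    calc frob (X' i - T) ≤ frob (X' i) + frob T := frob_sub_le _ _
      _ ≤ d + d := add_le_add (frob_le_of_mem_transportPolytope (hX' i))
          (frob_le_of_mem_transportPolytope hT)
      _ = 2 * d := by ring
  have hd : 0 ≤ 2 * d := (frob_nonneg _).trans (hdiam _ (hX' i))
  calc |blockResidual a b gradf X' i - blockResidual a b gradf X'' i|
      ≤ frob (gradf X' i - gradf X'' i) * (2 * d) := by
        rw [blockResidual, blockResidual, ← hEq]
        exact abs_iSup_finner_sub_iSup_finner_le hdiam _ _
    _ ≤ L * frobTotal (fun i => X' i - X'' i) * (2 * d) :=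
        mul_le_mul_of_nonneg_right (hlip X' X'' hX' hX'' i) hd
    _ = 2 * d * L * frobTotal (fun i => X' i - X'' i) := by ring

/-- If the block gradients of `f` are `L`-Lipschitz over the product of transport polytopes
and `X'`, `X''` are feasible with `X'_i = X''_i`, then
`|R_i(X') − R_i(X'')| ≤ 2 d_i L ‖X' − X''‖`, where
`d_i = min {√(m_i)·‖a_i‖_∞, √(n_i)·‖b_i‖_∞}`. -/
theorem blockResidual_lipschitz {N : ℕ} {m n : Fin N → ℕ}
    (a : ∀ i, Fin (m i) → ℝ) (b : ∀ i, Fin (n i) → ℝ)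
    (ha : ∀ i j, 0 ≤ a i j) (hb : ∀ i k, 0 ≤ b i k)
    (f : (∀ i, Matrix (Fin (m i)) (Fin (n i)) ℝ) → ℝ)
    (gradf : (∀ i, Matrix (Fin (m i)) (Fin (n i)) ℝ) →
      ∀ i, Matrix (Fin (m i)) (Fin (n i)) ℝ)
    (L : ℝ) (hL : 0 ≤ L)
    (hlip : ∀ X X' : ∀ i, Matrix (Fin (m i)) (Fin (n i)) ℝ,
      (∀ i, X i ∈ transportPolytope (a i) (b i)) →
      (∀ i, X' i ∈ transportPolytope (a i) (b i)) →
      ∀ i, frob (gradf X i - gradf X' i) ≤ L * frobTotal (fun i => X i - X' i))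
    (X' X'' : ∀ i, Matrix (Fin (m i)) (Fin (n i)) ℝ)
    (hX' : ∀ i, X' i ∈ transportPolytope (a i) (b i))
    (hX'' : ∀ i, X'' i ∈ transportPolytope (a i) (b i))
    (i : Fin N) (hEq : X' i = X'' i) :
    |blockResidual a b gradf X' i - blockResidual a b gradf X'' i| ≤
      2 * min (Real.sqrt (m i) * (⨆ j, |a i j|)) (Real.sqrt (n i) * (⨆ k, |b i k|)) *
        L * frobTotal (fun i => X' i - X'' i) :=
  blockResidual_lipschitz_general a b gradf L hlip X' X'' hX' hX'' i hEq
end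

section
/- If the kernel matrix Ψ = exp(−C/λ) with λ > 0 has all entries strictly positive (which it does automatically for any real C), and a ∈ ℝ₊₊^m, b ∈ ℝ₊₊^n with Σa = Σb, then there exist positive vectors ǔ ∈ ℝ₊₊^m, v̌ ∈ ℝ₊₊^n, unique up to a common scalar rescaling (ǔ ↦ sǔ, v̌ ↦ v̌/s), such that Diag(ǔ) Ψ Diag(v̌) ∈ U(a,b). -/
open Real Filter

lemma exp_ge_affine (p q t : ℝ) (hp : 0 < p) (hq : 0 < q) :
    q - q * Real.log (q / p) ≤ p * Real.exp t - q * t := by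
  have h := Real.add_one_le_exp (t - Real.log (q / p))
  have hqp : 0 < q / p := div_pos hq hp
  have he : Real.exp (t - Real.log (q / p)) = p * Real.exp t / q := by
    rw [Real.exp_sub, Real.exp_log hqp]
    field_simp
  rw [he] at h
  have := mul_le_mul_of_nonneg_left h hq.le
  rw [mul_div_cancel₀ _ hq.ne'] at this
  nlinarith

lemma eq_of_scalar_min (P Q : ℝ) (hP : 0 < P) (hQ : 0 < Q)
    (h : ∀ t : ℝ, Q * t ≤ P * (Real.exp t - 1)) : P = Q := by
  have hPQ : P ≤ Q := by
    apply le_of_forall_pos_le_add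
    intro ε hε
    set s := ε / Q with hs
    have hs0 : 0 < s := div_pos hε hQ
    have h1 : P * (1 - Real.exp (-s)) ≤ Q * s := by nlinarith [h (-s)]
    have key : (1 + s) * Real.exp (-s) ≤ 1 := by
      have h2 := Real.add_one_le_exp s
      have h3 : Real.exp (-s) * Real.exp s = 1 := by
        rw [← Real.exp_add]; simp
      nlinarith [Real.exp_pos (-s)]
    -- (1+s)(1-exp(-s)) ≥ s
    have h4 : s ≤ (1 + s) * (1 - Real.exp (-s)) := by nlinarith
    have h5 : P * s ≤ Q * s * (1 + s) := by nlinarith [Real.exp_pos (-s)]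
    have h6 : P ≤ Q * (1 + s) := by nlinarith
    have h7 : Q * s = ε := by rw [hs]; field_simp
    nlinarith
  have hQP : Q ≤ P := by
    apply le_of_forall_pos_le_add
    intro ε hε
    set s := min (ε / Q) (1/2) with hs
    have hs0 : 0 < s := lt_min (div_pos hε hQ) (by norm_num)
    have hs1 : s < 1 := lt_of_le_of_lt (min_le_right _ _) (by norm_num)
    have h1 := h s
    have key : (1 - s) * Real.exp s ≤ 1 := by
      have h2 := Real.add_one_le_exp (-s)
      have h3 : Real.exp (-s) * Real.exp s = 1 := by
        rw [← Real.exp_add]; simp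
      nlinarith [Real.exp_pos s]
    have h4 : (Real.exp s - 1) * (1 - s) ≤ s := by nlinarith
    have h5 : Q * s * (1 - s) ≤ P * s := by nlinarith [Real.exp_pos s]
    have h6 : Q * (1 - s) ≤ P := by nlinarith
    have h7 : Q * s ≤ ε := by
      have hle : s ≤ ε / Q := min_le_left _ _
      calc Q * s ≤ Q * (ε / Q) := by nlinarith
        _ = ε := by field_simp
    nlinarith
  linarith

lemma sublevel_bdd (p q C : ℝ) (hp : 0 < p) (hq : 0 < q) :
    ∃ M : ℝ, 0 ≤ M ∧ ∀ t : ℝ, p * Real.exp t - q * t ≤ C → |t| ≤ M := by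
  have htop : Tendsto (fun t => p * Real.exp t - q * t) atTop atTop := by
    have hdiv : Tendsto (fun t : ℝ => Real.exp t / t ^ 1) atTop atTop :=
      Real.tendsto_exp_div_pow_atTop 1
    have hev : ∀ᶠ t in atTop, (p / 2) * Real.exp t ≤ p * Real.exp t - q * t := by
      have h1 : ∀ᶠ t in atTop, 2 * q / p ≤ Real.exp t / t ^ 1 := hdiv.eventually_ge_atTop _
      filter_upwards [h1, eventually_gt_atTop (0:ℝ)] with t ht ht0
      rw [pow_one, le_div_iff₀ ht0] at ht
      have hmul := mul_le_mul_of_nonneg_right ht hp.le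
      have hcan : 2 * q / p * t * p = 2 * q * t := by field_simp
      rw [hcan] at hmul
      nlinarith
    exact tendsto_atTop_mono' _ hev
      ((tendsto_exp_atTop.const_mul_atTop (by positivity : (0:ℝ) < p / 2)))
  have hbot : Tendsto (fun t => p * Real.exp t - q * t) atBot atTop := by
    have h1 : Tendsto (fun t : ℝ => p * Real.exp t) atBot (nhds 0) := by
      simpa using (Real.tendsto_exp_atBot.const_mul p)
    have h2 : Tendsto (fun t : ℝ => -(q * t)) atBot atTop := by
      have : Tendsto (fun t : ℝ => q * t) atBot atBot :=
        (tendsto_id).const_mul_atBot hq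
      exact tendsto_neg_atBot_atTop.comp this
    simpa [sub_eq_add_neg] using h1.add_atTop h2
  obtain ⟨T, hT⟩ := (htop.eventually_gt_atTop C).exists_forall_of_atTop
  obtain ⟨S, hS⟩ := (hbot.eventually_gt_atTop C).exists_forall_of_atBot
  refine ⟨max |T| |S|, le_trans (abs_nonneg T) (le_max_left _ _), fun t ht => ?_⟩
  rw [abs_le]
  constructor
  · by_contra hc
    push_neg at hc
    have hts : t ≤ S := by
      have h3 : -(max |T| |S|) ≤ -|S| := neg_le_neg (le_max_right _ _)
      have h4 : -|S| ≤ S := neg_abs_le S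
      linarith
    exact absurd (hS t hts) (by linarith)
  · by_contra hc
    push_neg at hc
    have : T ≤ t := le_trans (le_abs_self T) (le_trans (le_max_left _ _) hc.le)
    exact absurd (hT t this) (by linarith)

-- row update rearrangement
lemma F_update_row {m n : ℕ} (Ψ w : Fin m → Fin n → ℝ) (x : Fin m → ℝ) (y : Fin n → ℝ)
    (j : Fin m) (t : ℝ) :
    (∑ j', ∑ k, (Ψ j' k * Real.exp (Function.update x j (x j + t) j' + y k)
       - w j' k * (Function.update x j (x j + t) j' + y k)))
      = (∑ j', ∑ k, (Ψ j' k * Real.exp (x j' + y k) - w j' k * (x j' + y k)))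
        + (∑ k, Ψ j k * Real.exp (x j + y k)) * (Real.exp t - 1) - (∑ k, w j k) * t := by
  rw [← Finset.sum_erase_add _ _ (Finset.mem_univ j),
      ← Finset.sum_erase_add _ _ (Finset.mem_univ j)]
  have h1 : ∑ j' ∈ Finset.univ.erase j, ∑ k,
      (Ψ j' k * Real.exp (Function.update x j (x j + t) j' + y k)
        - w j' k * (Function.update x j (x j + t) j' + y k))
      = ∑ j' ∈ Finset.univ.erase j, ∑ k,
      (Ψ j' k * Real.exp (x j' + y k) - w j' k * (x j' + y k)) := by
    refine Finset.sum_congr rfl fun j' hj' => ?_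
    rw [Function.update_of_ne (Finset.ne_of_mem_erase hj')]
  rw [h1, Function.update_self]
  have h2 : ∑ k, (Ψ j k * Real.exp ((x j + t) + y k) - w j k * ((x j + t) + y k))
      = ∑ k, ((Ψ j k * Real.exp (x j + y k) - w j k * (x j + y k))
          + (Ψ j k * Real.exp (x j + y k)) * (Real.exp t - 1) - w j k * t) := by
    refine Finset.sum_congr rfl fun k _ => ?_
    rw [show (x j + t) + y k = (x j + y k) + t from by ring, Real.exp_add]
    ring
  rw [h2]
  simp only [Finset.sum_sub_distrib, Finset.sum_add_distrib, ← Finset.sum_mul]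
  ring

-- column update rearrangement
lemma F_update_col {m n : ℕ} (Ψ w : Fin m → Fin n → ℝ) (x : Fin m → ℝ) (y : Fin n → ℝ)
    (k : Fin n) (t : ℝ) :
    (∑ j, ∑ k', (Ψ j k' * Real.exp (x j + Function.update y k (y k + t) k')
       - w j k' * (x j + Function.update y k (y k + t) k')))
      = (∑ j, ∑ k', (Ψ j k' * Real.exp (x j + y k') - w j k' * (x j + y k')))
        + (∑ j, Ψ j k * Real.exp (x j + y k)) * (Real.exp t - 1) - (∑ j, w j k) * t := by
  rw [Finset.sum_comm (f := fun j k' => (Ψ j k' * Real.exp (x j + Function.update y k (y k + t) k')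
       - w j k' * (x j + Function.update y k (y k + t) k'))),
      Finset.sum_comm (f := fun j k' => (Ψ j k' * Real.exp (x j + y k') - w j k' * (x j + y k')))]
  rw [← Finset.sum_erase_add _ _ (Finset.mem_univ k),
      ← Finset.sum_erase_add _ _ (Finset.mem_univ k)]
  have h1 : ∑ k' ∈ Finset.univ.erase k, ∑ j,
      (Ψ j k' * Real.exp (x j + Function.update y k (y k + t) k')
        - w j k' * (x j + Function.update y k (y k + t) k'))
      = ∑ k' ∈ Finset.univ.erase k, ∑ j,
      (Ψ j k' * Real.exp (x j + y k') - w j k' * (x j + y k')) := by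
    refine Finset.sum_congr rfl fun k' hk' => ?_
    rw [Function.update_of_ne (Finset.ne_of_mem_erase hk')]
  rw [h1, Function.update_self]
  have h2 : ∑ j, (Ψ j k * Real.exp (x j + (y k + t)) - w j k * (x j + (y k + t)))
      = ∑ j, ((Ψ j k * Real.exp (x j + y k) - w j k * (x j + y k))
          + (Ψ j k * Real.exp (x j + y k)) * (Real.exp t - 1) - w j k * t) := by
    refine Finset.sum_congr rfl fun j _ => ?_
    rw [show x j + (y k + t) = (x j + y k) + t from by ring, Real.exp_add]
    ring
  rw [h2]
  simp only [Finset.sum_sub_distrib, Finset.sum_add_distrib, ← Finset.sum_mul]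
  ring

lemma sinkhorn_exists {m n : ℕ} (hm : 0 < m) (hn : 0 < n)
    (Ψ : Matrix (Fin m) (Fin n) ℝ) (hΨ : ∀ j k, 0 < Ψ j k)
    (a : Fin m → ℝ) (b : Fin n → ℝ) (ha : ∀ j, 0 < a j) (hb : ∀ k, 0 < b k)
    (hmass : ∑ j, a j = ∑ k, b k) :
    ∃ x : Fin m → ℝ, ∃ y : Fin n → ℝ,
      (∀ j, ∑ k, Ψ j k * Real.exp (x j + y k) = a j) ∧
      (∀ k, ∑ j, Ψ j k * Real.exp (x j + y k) = b k) := by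
  have j0 : Fin m := ⟨0, hm⟩
  have k0 : Fin n := ⟨0, hn⟩
  set A := ∑ k, b k with hA
  have hApos : 0 < A := Finset.sum_pos (fun k _ => hb k) ⟨k0, Finset.mem_univ _⟩
  set w : Fin m → Fin n → ℝ := fun j k => a j * b k / A with hw
  have hwpos : ∀ j k, 0 < w j k := fun j k => div_pos (mul_pos (ha j) (hb k)) hApos
  have hwrow : ∀ j, ∑ k, w j k = a j := by
    intro j
    simp only [hw]
    rw [← Finset.sum_div, ← Finset.mul_sum, ← hA, mul_div_assoc, div_self hApos.ne', mul_one]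
  have hwcol : ∀ k, ∑ j, w j k = b k := by
    intro k
    simp only [hw]
    rw [← Finset.sum_div, ← Finset.sum_mul, hmass, mul_comm, mul_div_assoc,
      div_self hApos.ne', mul_one]
  -- the potential
  set F : (Fin m → ℝ) × (Fin n → ℝ) → ℝ :=
    fun p => ∑ j, ∑ k, (Ψ j k * Real.exp (p.1 j + p.2 k) - w j k * (p.1 j + p.2 k)) with hF
  have hFcont : Continuous F := by
    apply continuous_finset_sum
    intro j _
    apply continuous_finset_sum
    intro k _
    have h1 : Continuous fun p : (Fin m → ℝ) × (Fin n → ℝ) => p.1 j + p.2 k :=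
      ((continuous_apply j).comp continuous_fst).add ((continuous_apply k).comp continuous_snd)
    exact (continuous_const.mul (Real.continuous_exp.comp h1)).sub (continuous_const.mul h1)
  -- per-term lower bounds
  set c : Fin m → Fin n → ℝ := fun j k => w j k - w j k * Real.log (w j k / Ψ j k) with hc
  have hcle : ∀ j k t, c j k ≤ Ψ j k * Real.exp t - w j k * t :=
    fun j k t => exp_ge_affine _ _ t (hΨ j k) (hwpos j k)
  set C1 : ℝ := F 0 + ∑ j, ∑ k, |c j k| with hC1
  -- each term is at most C1 on the sublevel set
  have hterm : ∀ p : (Fin m → ℝ) × (Fin n → ℝ), F p ≤ F 0 → ∀ j k,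
      Ψ j k * Real.exp (p.1 j + p.2 k) - w j k * (p.1 j + p.2 k) ≤ C1 := by
    intro p hp j k
    set g : Fin m → Fin n → ℝ :=
      fun j' k' => Ψ j' k' * Real.exp (p.1 j' + p.2 k') - w j' k' * (p.1 j' + p.2 k') with hg
    have hFg : F p = ∑ q : Fin m × Fin n, g q.1 q.2 := by
      rw [hF, Fintype.sum_prod_type]
    have hsplit : ∑ q ∈ Finset.univ.erase (j, k), g q.1 q.2 + g j k = ∑ q : Fin m × Fin n, g q.1 q.2 := by
      have := Finset.sum_erase_add Finset.univ (fun q : Fin m × Fin n => g q.1 q.2)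
        (Finset.mem_univ (j, k))
      exact this
    have hlb : ∀ q : Fin m × Fin n, -|c q.1 q.2| ≤ g q.1 q.2 := by
      intro q
      exact le_trans (neg_abs_le _) (hcle q.1 q.2 _)
    have h1 : -(∑ q : Fin m × Fin n, |c q.1 q.2|) ≤ ∑ q ∈ Finset.univ.erase (j, k), g q.1 q.2 := by
      calc -(∑ q : Fin m × Fin n, |c q.1 q.2|)
          ≤ -(∑ q ∈ Finset.univ.erase (j, k), |c q.1 q.2|) := by
            apply neg_le_neg
            exact Finset.sum_le_sum_of_subset_of_nonneg (Finset.erase_subset _ _)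
              (fun _ _ _ => abs_nonneg _)
        _ = ∑ q ∈ Finset.univ.erase (j, k), -|c q.1 q.2| := by rw [Finset.sum_neg_distrib]
        _ ≤ _ := Finset.sum_le_sum (fun q _ => hlb q)
    have h2 : ∑ q : Fin m × Fin n, |c q.1 q.2| = ∑ j, ∑ k, |c j k| := by
      rw [Fintype.sum_prod_type]
    have := hsplit
    have hgjk : g j k = F p - ∑ q ∈ Finset.univ.erase (j, k), g q.1 q.2 := by
      rw [hFg]; linarith [hsplit]
    calc g j k ≤ F p + ∑ q : Fin m × Fin n, |c q.1 q.2| := by rw [hgjk]; linarith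
      _ ≤ F 0 + ∑ j, ∑ k, |c j k| := by rw [h2]; linarith
  -- bounds for each pair
  have hbdd : ∀ q : Fin m × Fin n, ∃ M, 0 ≤ M ∧
      ∀ t, Ψ q.1 q.2 * Real.exp t - w q.1 q.2 * t ≤ C1 → |t| ≤ M :=
    fun q => sublevel_bdd _ _ C1 (hΨ q.1 q.2) (hwpos q.1 q.2)
  choose M hM0 hM using hbdd
  have hne : (Finset.univ : Finset (Fin m × Fin n)).Nonempty := ⟨(j0, k0), Finset.mem_univ _⟩
  set Mx := Finset.univ.sup' hne M with hMx
  have hMxle : ∀ q : Fin m × Fin n, M q ≤ Mx := fun q => Finset.le_sup' M (Finset.mem_univ q)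
  have hMx0 : 0 ≤ Mx := le_trans (hM0 (j0, k0)) (hMxle _)
  -- the compact set
  set K : Set ((Fin m → ℝ) × (Fin n → ℝ)) := {p | p.1 j0 = 0 ∧ F p ≤ F 0} with hK
  have hK0 : (0 : (Fin m → ℝ) × (Fin n → ℝ)) ∈ K := ⟨rfl, le_refl _⟩
  have hKclosed : IsClosed K := by
    have : K = {p : (Fin m → ℝ) × (Fin n → ℝ) | p.1 j0 = 0} ∩ {p | F p ≤ F 0} := rfl
    rw [this]
    exact (isClosed_eq ((continuous_apply j0).comp continuous_fst) continuous_const).inter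
      (isClosed_le hFcont continuous_const)
  have hKbdd : Bornology.IsBounded K := by
    rw [isBounded_iff_forall_norm_le]
    refine ⟨2 * Mx, fun p hp => ?_⟩
    obtain ⟨hp1, hp2⟩ := hp
    have hy : ∀ k, |p.2 k| ≤ Mx := by
      intro k
      have h1 := hterm p hp2 j0 k
      rw [hp1, zero_add] at h1
      exact le_trans (hM (j0, k) _ h1) (hMxle _)
    have hx : ∀ j, |p.1 j| ≤ 2 * Mx := by
      intro j
      have h1 := hterm p hp2 j k0
      have h2 := le_trans (hM (j, k0) _ h1) (hMxle _)
      have h3 := hy k0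
      calc |p.1 j| = |(p.1 j + p.2 k0) - p.2 k0| := by ring_nf
        _ ≤ |p.1 j + p.2 k0| + |p.2 k0| := abs_sub _ _
        _ ≤ 2 * Mx := by linarith
    rw [Prod.norm_def]
    apply max_le
    · rw [pi_norm_le_iff_of_nonneg (by linarith)]
      intro j; rw [Real.norm_eq_abs]; exact hx j
    · rw [pi_norm_le_iff_of_nonneg (by linarith)]
      intro k; rw [Real.norm_eq_abs]; exact le_trans (hy k) (by linarith)
  have hKcompact : IsCompact K := Metric.isCompact_of_isClosed_isBounded hKclosed hKbdd
  obtain ⟨p, hpK, hpmin⟩ := hKcompact.exists_isMinOn ⟨0, hK0⟩ hFcont.continuousOn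
  rw [isMinOn_iff] at hpmin
  -- global minimality
  have hglob : ∀ q : (Fin m → ℝ) × (Fin n → ℝ), F p ≤ F q := by
    intro q
    set q' : (Fin m → ℝ) × (Fin n → ℝ) :=
      (fun j => q.1 j - q.1 j0, fun k => q.2 k + q.1 j0) with hq'
    have hFq' : F q' = F q := by
      rw [hF]
      refine Finset.sum_congr rfl fun j _ => Finset.sum_congr rfl fun k _ => ?_
      have : q'.1 j + q'.2 k = q.1 j + q.2 k := by simp only [hq']; ring
      rw [this]
    have hq'0 : q'.1 j0 = 0 := by simp [hq']
    by_cases hcas : F q' ≤ F 0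
    · exact le_trans (hpmin q' ⟨hq'0, hcas⟩) hFq'.le
    · push_neg at hcas
      have := hpmin 0 hK0
      linarith
  -- stationarity
  refine ⟨p.1, p.2, ?_, ?_⟩
  · intro j
    set P := ∑ k, Ψ j k * Real.exp (p.1 j + p.2 k) with hP
    have hPpos : 0 < P :=
      Finset.sum_pos (fun k _ => mul_pos (hΨ j k) (Real.exp_pos _)) ⟨k0, Finset.mem_univ _⟩
    refine eq_of_scalar_min P (a j) hPpos (ha j) fun t => ?_
    have h1 := hglob (Function.update p.1 j (p.1 j + t), p.2)
    have h2 : F (Function.update p.1 j (p.1 j + t), p.2)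
        = F p + P * (Real.exp t - 1) - (a j) * t := by
      rw [hF]
      have := F_update_row Ψ w p.1 p.2 j t
      simp only at this ⊢
      rw [this, hwrow j]
    rw [h2] at h1
    linarith
  · intro k
    set P := ∑ j, Ψ j k * Real.exp (p.1 j + p.2 k) with hP
    have hPpos : 0 < P :=
      Finset.sum_pos (fun j _ => mul_pos (hΨ j k) (Real.exp_pos _)) ⟨j0, Finset.mem_univ _⟩
    refine eq_of_scalar_min P (b k) hPpos (hb k) fun t => ?_
    have h1 := hglob (p.1, Function.update p.2 k (p.2 k + t))
    have h2 : F (p.1, Function.update p.2 k (p.2 k + t))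
        = F p + P * (Real.exp t - 1) - (b k) * t := by
      rw [hF]
      have := F_update_col Ψ w p.1 p.2 k t
      simp only at this ⊢
      rw [this, hwcol k]
    rw [h2] at h1
    linarith

lemma sinkhorn_unique {m n : ℕ} (hm : 0 < m) (hn : 0 < n)
    (Ψ : Matrix (Fin m) (Fin n) ℝ) (hΨ : ∀ j k, 0 < Ψ j k)
    (a : Fin m → ℝ) (b : Fin n → ℝ) (ha : ∀ j, 0 < a j) (hb : ∀ k, 0 < b k)
    (u : Fin m → ℝ) (v : Fin n → ℝ) (hu : ∀ j, 0 < u j) (hv : ∀ k, 0 < v k)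
    (u' : Fin m → ℝ) (v' : Fin n → ℝ) (hu' : ∀ j, 0 < u' j) (hv' : ∀ k, 0 < v' k)
    (hrow : ∀ j, ∑ k, u j * Ψ j k * v k = a j)
    (hrow' : ∀ j, ∑ k, u' j * Ψ j k * v' k = a j)
    (hcol' : ∀ k, ∑ j, u' j * Ψ j k * v' k = b k)
    (hcol : ∀ k, ∑ j, u j * Ψ j k * v k = b k) :
    ∃ s : ℝ, 0 < s ∧ (∀ j, u' j = s * u j) ∧ (∀ k, v' k = v k / s) := by
  have j0 : Fin m := ⟨0, hm⟩
  have k0 : Fin n := ⟨0, hn⟩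
  set T : Fin m → Fin n → ℝ := fun j k => u j * Ψ j k * v k with hT
  have hTpos : ∀ j k, 0 < T j k := fun j k => mul_pos (mul_pos (hu j) (hΨ j k)) (hv k)
  set r : Fin m → ℝ := fun j => u' j / u j with hr
  set cc : Fin n → ℝ := fun k => v' k / v k with hcc
  have hrpos : ∀ j, 0 < r j := fun j => div_pos (hu' j) (hu j)
  have hccpos : ∀ k, 0 < cc k := fun k => div_pos (hv' k) (hv k)
  have hueq : ∀ j, u' j = r j * u j := fun j => (div_mul_cancel₀ (u' j) (hu j).ne').symm
  have hveq : ∀ k, v' k = cc k * v k := fun k => (div_mul_cancel₀ (v' k) (hv k).ne').symm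
  have hkey : ∀ j k, u' j * Ψ j k * v' k = r j * cc k * T j k := by
    intro j k
    rw [hueq j, hveq k]
    simp only [hT]
    ring
  have hrow2 : ∀ j, ∑ k, r j * cc k * T j k = a j := by
    intro j; rw [← hrow' j]
    exact Finset.sum_congr rfl fun k _ => (hkey j k).symm
  have hcol2 : ∀ k, ∑ j, r j * cc k * T j k = b k := by
    intro k; rw [← hcol' k]
    exact Finset.sum_congr rfl fun j _ => (hkey j k).symm
  obtain ⟨jM, _, hjM⟩ := Finset.exists_max_image Finset.univ r ⟨j0, Finset.mem_univ _⟩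
  obtain ⟨kμ, _, hkμ⟩ := Finset.exists_min_image Finset.univ cc ⟨k0, Finset.mem_univ _⟩
  set s := r jM with hs
  set μ := cc kμ with hμ
  have hspos : 0 < s := hrpos jM
  have hμpos : 0 < μ := hccpos kμ
  have h1 : s * μ ≤ 1 := by
    have hle : ∑ k, (s * μ) * T jM k ≤ ∑ k, r jM * cc k * T jM k := by
      refine Finset.sum_le_sum fun k _ => ?_
      rw [← hs]
      exact mul_le_mul_of_nonneg_right
        (mul_le_mul_of_nonneg_left (hkμ k (Finset.mem_univ k)) hspos.le) (hTpos jM k).le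
    rw [← Finset.mul_sum, hrow2 jM, hrow jM] at hle
    have := ha jM
    nlinarith
  have h2 : 1 ≤ s * μ := by
    have hle : ∑ j, r j * cc kμ * T j kμ ≤ ∑ j, (s * μ) * T j kμ := by
      refine Finset.sum_le_sum fun j _ => ?_
      rw [← hμ]
      exact mul_le_mul_of_nonneg_right
        (mul_le_mul_of_nonneg_right (hjM j (Finset.mem_univ j)) hμpos.le) (hTpos j kμ).le
    rw [← Finset.mul_sum, hcol2 kμ, hcol kμ] at hle
    have := hb kμ
    nlinarith
  have hsμ : s * μ = 1 := le_antisymm h1 h2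
  have hccμ : ∀ k, cc k = μ := by
    have hzero : ∑ k, r jM * (cc k - μ) * T jM k = 0 := by
      have he : ∑ k, r jM * (cc k - μ) * T jM k
          = ∑ k, r jM * cc k * T jM k - (s * μ) * ∑ k, T jM k := by
        rw [Finset.mul_sum, ← Finset.sum_sub_distrib]
        exact Finset.sum_congr rfl fun k _ => by rw [hs]; ring
      rw [he, hrow2 jM, hrow jM, hsμ, one_mul, sub_self]
    have hnn : ∀ k ∈ Finset.univ, 0 ≤ r jM * (cc k - μ) * T jM k := by
      intro k _
      rw [← hs]
      have h3 := hkμ k (Finset.mem_univ k)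
      exact mul_nonneg (mul_nonneg hspos.le (by linarith)) (hTpos jM k).le
    have hz := (Finset.sum_eq_zero_iff_of_nonneg hnn).mp hzero
    intro k
    have h4 := hz k (Finset.mem_univ k)
    have h5 := (hTpos jM k).ne'
    have h6 := hspos.ne'
    rcases mul_eq_zero.mp h4 with h | h
    · rcases mul_eq_zero.mp h with h' | h'
      · exact absurd h' (by rw [← hs]; exact h6)
      · linarith [sub_eq_zero.mp h']
    · exact absurd h h5
  have hrs : ∀ j, r j = s := by
    intro j
    have he : ∑ k, r j * cc k * T j k = r j * μ * ∑ k, T j k := by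
      rw [Finset.mul_sum]
      exact Finset.sum_congr rfl fun k _ => by rw [hccμ k]
    have h7 : r j * μ * a j = a j := by
      rw [← hrow j, ← he, hrow2 j, hrow j]
    have h8 : r j * μ = 1 := by
      have := ha j
      nlinarith
    have h9 : r j * μ = s * μ := by rw [h8, hsμ]
    exact mul_right_cancel₀ hμpos.ne' h9
  refine ⟨s, hspos, fun j => ?_, fun k => ?_⟩
  · rw [← hrs j, hueq j]
  · rw [eq_div_iff hspos.ne', hveq k, hccμ k]
    linear_combination v k * hsμ


/-- Sinkhorn scaling theorem: for a matrix `Ψ` with strictly positive entries (such as the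
kernel `exp(−C/λ)`) and strictly positive marginals `a`, `b` of equal total mass, there exist
positive vectors `ǔ`, `v̌` such that `Diag(ǔ) Ψ Diag(v̌) ∈ U(a,b)`, and they are unique up to
the rescaling `(ǔ, v̌) ↦ (s·ǔ, v̌/s)` with `s > 0`. -/
theorem sinkhorn_scaling {m n : ℕ} (Ψ : Matrix (Fin m) (Fin n) ℝ)
    (hΨ : ∀ j k, 0 < Ψ j k)
    (a : Fin m → ℝ) (b : Fin n → ℝ)
    (ha : ∀ j, 0 < a j) (hb : ∀ k, 0 < b k)
    (hmass : ∑ j, a j = ∑ k, b k) :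
    ∃ u : Fin m → ℝ, ∃ v : Fin n → ℝ,
      (∀ j, 0 < u j) ∧ (∀ k, 0 < v k) ∧
      (fun j k => u j * Ψ j k * v k) ∈ transportPolytope a b ∧
      ∀ u' : Fin m → ℝ, ∀ v' : Fin n → ℝ,
        (∀ j, 0 < u' j) → (∀ k, 0 < v' k) →
        (fun j k => u' j * Ψ j k * v' k) ∈ transportPolytope a b →
        ∃ s : ℝ, 0 < s ∧ (∀ j, u' j = s * u j) ∧ (∀ k, v' k = v k / s) := by
  by_cases hm0 : m = 0
  · subst hm0
    have hn0 : n = 0 := by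
      by_contra h
      have hn : 0 < n := Nat.pos_of_ne_zero h
      have hpos : 0 < ∑ k, b k := Finset.sum_pos (fun k _ => hb k) ⟨⟨0, hn⟩, Finset.mem_univ _⟩
      rw [← hmass] at hpos
      simp at hpos
    subst hn0
    refine ⟨fun _ => 1, fun _ => 1, fun j => one_pos, fun k => one_pos,
      ⟨fun j _ => j.elim0, fun j => j.elim0, fun k => k.elim0⟩,
      fun u' v' _ _ _ => ⟨1, one_pos, fun j => j.elim0, fun k => k.elim0⟩⟩
  · have hm : 0 < m := Nat.pos_of_ne_zero hm0
    by_cases hn0 : n = 0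
    · exfalso
      subst hn0
      have hpos : 0 < ∑ j, a j := Finset.sum_pos (fun j _ => ha j) ⟨⟨0, hm⟩, Finset.mem_univ _⟩
      rw [hmass] at hpos
      simp at hpos
    · have hn : 0 < n := Nat.pos_of_ne_zero hn0
      obtain ⟨x, y, hrow, hcol⟩ := sinkhorn_exists hm hn Ψ hΨ a b ha hb hmass
      set u : Fin m → ℝ := fun j => Real.exp (x j) with hu
      set v : Fin n → ℝ := fun k => Real.exp (y k) with hv
      have hupos : ∀ j, 0 < u j := fun j => Real.exp_pos _
      have hvpos : ∀ k, 0 < v k := fun k => Real.exp_pos _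
      have hTeq : ∀ j k, u j * Ψ j k * v k = Ψ j k * Real.exp (x j + y k) := by
        intro j k
        rw [Real.exp_add]
        simp only [hu, hv]
        ring
      have hrow' : ∀ j, ∑ k, u j * Ψ j k * v k = a j := by
        intro j; rw [← hrow j]; exact Finset.sum_congr rfl fun k _ => hTeq j k
      have hcol' : ∀ k, ∑ j, u j * Ψ j k * v k = b k := by
        intro k; rw [← hcol k]; exact Finset.sum_congr rfl fun j _ => hTeq j k
      refine ⟨u, v, hupos, hvpos,
        ⟨fun j k => (mul_pos (mul_pos (hupos j) (hΨ j k)) (hvpos k)).le, hrow', hcol'⟩,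
        fun u' v' hu' hv' hmem => ?_⟩
      obtain ⟨_, hrow'', hcol''⟩ := hmem
      exact sinkhorn_unique hm hn Ψ hΨ a b ha hb u v hupos hvpos u' v' hu' hv'
        hrow' hrow'' hcol'' hcol'
end
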